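/- In the Majority cross-validation model with n, k, m, P, L̂_i as in the context, the covariance between the first two fold losses admits the exact combinatorial form: E[L̂₁·L̂₂] − E[L̂₁]·E[L̂₂] = 2^{−n} · Σ_{j=0}^{m−1} (binom(m−1, j))² · binom(n−2m, ⌊(n−m)/2⌋ − j). -/

import Mathlib

open Finset

/-- Fold `i` (for `1 ≤ i ≤ k`) consists of the indices `{(i-1)·m, …, i·m - 1}`. -/
def cvFold (n m i : ℕ) : Finset (Fin n) :=
  Finset.univ.filter fun j => (i - 1) * m ≤ (j : ℕ) ∧ (j : ℕ) < i * m

/-- `X_i(ω)`: number of 1-labels inside cvFold `i`. -/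
def Xc (n m i : ℕ) (ω : Fin n → Bool) : ℕ :=
  ((cvFold n m i).filter fun j => ω j = true).card

/-- `Y_{-i}(ω)`: number of 1-labels outside cvFold `i`. -/
def Yc (n m i : ℕ) (ω : Fin n → Bool) : ℕ :=
  ((Finset.univ \ cvFold n m i).filter fun j => ω j = true).card

/-- Hold-out error on cvFold `i` of the Majority algorithm trained on the complement of
cvFold `i`: it predicts the constant label `1` iff `Y_{-i} > (n-m)/2`, so the hold-out
error is `(X_i/m)·1{Y_{-i} ≤ (n-m)/2} + ((m-X_i)/m)·1{Y_{-i} > (n-m)/2}`. -/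
noncomputable def Lhat (n m i : ℕ) (ω : Fin n → Bool) : ℝ :=
  if ((n : ℝ) - m) / 2 < (Yc n m i ω : ℝ) then ((m : ℝ) - Xc n m i ω) / m
  else (Xc n m i ω : ℝ) / m

/-- Expectation with respect to the uniform probability measure on `Fin n → Bool`
(i.e. `n` i.i.d. fair-coin binary labels). -/
noncomputable def expec (n : ℕ) (f : (Fin n → Bool) → ℝ) : ℝ :=
  (∑ ω : Fin n → Bool, f ω) / 2 ^ n

/-- Binomial coefficient with an integer lower index, with the convention that it
vanishes for negative lower index (and, via `Nat.choose`, above the upper index). -/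
def ibinom (a : ℕ) (b : ℤ) : ℕ := if 0 ≤ b then a.choose b.toNat else 0

/-!
Write `X₁, X₂` for the numbers of ones in the two folds and `D` for the number outside both, and
`T = ⌊(n - m)/2⌋`. Then `m L̂₁ = ℓ(X₁, X₂ + D)` and `m L̂₂ = ℓ(X₂, X₁ + D)` with
`ℓ(x, y) = (m - x) - 1{y ≤ T} (m - 2x)`. Because `∑ₐ C(m, a) (m - 2a) = 0`, averaging over one
fold kills the threshold term, so `E L̂ᵢ = 1/2`; and given `D = c` the product `L̂₁ L̂₂` averages to
`1/4 + (2⁻ᵐ S_c / m)²` with `S_c = ∑_{a + c ≤ T} C(m, a) (m - 2a)`. This partial sum telescopes to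
`m C(m - 1, T - c)`; averaging over `D ~ Bin(n - 2m, 1/2)` and substituting `j = T - c` gives the
formula.
-/

section BooleanCounting

variable {α M : Type*} [DecidableEq α] [AddCommMonoid M]

theorem sum_boolFun_eq_sum_finset [Fintype α] (f : (α → Bool) → M) :
    ∑ ω : α → Bool, f ω = ∑ A : Finset α, f fun i => decide (i ∈ A) := by
  refine (Fintype.sum_bijective (fun A i => decide (i ∈ A)) ⟨fun A B h => ?_, fun ω => ?_⟩
    _ _ fun _ => rfl).symm
  · ext i
    simpa using congrFun h i
  · exact ⟨({i | ω i} : Finset α), funext fun i => by simp⟩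

theorem sum_powerset_union_of_disjoint {s t : Finset α} (hst : Disjoint s t)
    (g : Finset α → Finset α → M) :
    ∑ A ∈ (s ∪ t).powerset, g (A ∩ s) (A ∩ t) = ∑ B ∈ s.powerset, ∑ C ∈ t.powerset, g B C := by
  rw [← sum_product']
  refine sum_nbij' (fun A => (A ∩ s, A ∩ t)) (fun p => p.1 ∪ p.2) ?_ ?_ ?_ ?_ fun _ _ => rfl
  · intro A _
    simp
  · intro p hp
    simp only [mem_product, mem_powerset] at hp ⊢
    exact union_subset_union hp.1 hp.2
  · intro A hA
    rw [mem_powerset] at hA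
    simp [← inter_union_distrib_left, inter_eq_left.mpr hA]
  · rintro ⟨B, C⟩ hp
    simp only [mem_product, mem_powerset] at hp
    have hCs : C ∩ s = ∅ := disjoint_iff_inter_eq_empty.mp (disjoint_of_subset_left hp.2 hst.symm)
    have hBt : B ∩ t = ∅ := disjoint_iff_inter_eq_empty.mp (disjoint_of_subset_left hp.1 hst)
    simp [union_inter_distrib_right, inter_eq_left.mpr hp.1, inter_eq_left.mpr hp.2, hCs, hBt]

theorem sum_boolFun_card_filter_eq_sum_choose [Fintype α] {s t : Finset α} (hst : Disjoint s t)
    (g : ℕ → ℕ → ℕ → M) :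
    ∑ ω : α → Bool, g #{i ∈ s | ω i} #{i ∈ t | ω i} #{i ∈ (s ∪ t)ᶜ | ω i} =
      ∑ c ∈ range (#(s ∪ t)ᶜ + 1), (#(s ∪ t)ᶜ).choose c •
        ∑ a ∈ range (#s + 1), (#s).choose a • ∑ b ∈ range (#t + 1), (#t).choose b • g a b c := by
  have hsplit : ∀ A : Finset α, A ∩ (s ∪ t) ∩ s = A ∩ s ∧ A ∩ (s ∪ t) ∩ t = A ∩ t := fun A =>
    ⟨by rw [inter_assoc, union_inter_cancel_left], by rw [inter_assoc, union_inter_cancel_right]⟩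
  calc ∑ ω : α → Bool, g #{i ∈ s | ω i} #{i ∈ t | ω i} #{i ∈ (s ∪ t)ᶜ | ω i}
      = ∑ A ∈ ((s ∪ t) ∪ (s ∪ t)ᶜ).powerset,
          g #(A ∩ (s ∪ t) ∩ s) #(A ∩ (s ∪ t) ∩ t) #(A ∩ (s ∪ t)ᶜ) := by
        simp only [sum_boolFun_eq_sum_finset, decide_eq_true_eq, filter_mem_eq_inter,
          union_compl, powerset_univ, hsplit, inter_comm]
    _ = ∑ C ∈ (s ∪ t)ᶜ.powerset, ∑ B ∈ (s ∪ t).powerset, g #(B ∩ s) #(B ∩ t) #C := by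
        rw [sum_powerset_union_of_disjoint disjoint_compl_right
          (fun B C => g #(B ∩ s) #(B ∩ t) #C), sum_comm]
    _ = ∑ C ∈ (s ∪ t)ᶜ.powerset, ∑ A ∈ s.powerset, ∑ B ∈ t.powerset, g #A #B #C := by
        refine sum_congr rfl fun C _ => ?_
        exact sum_powerset_union_of_disjoint hst fun A B => g #A #B #C
    _ = _ := by
        rw [← sum_powerset_apply_card]
        refine sum_congr rfl fun C _ => ?_
        rw [← sum_powerset_apply_card]
        refine sum_congr rfl fun A _ => ?_
        rw [← sum_powerset_apply_card]

end BooleanCounting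

section Binomial

variable {R : Type*}

theorem sum_range_cast_choose [Semiring R] (m : ℕ) :
    ∑ a ∈ range (m + 1), (m.choose a : R) = 2 ^ m := by
  rw [← Nat.cast_sum, Nat.sum_range_choose, Nat.cast_pow, Nat.cast_ofNat]

theorem sum_range_choose_mul_sub_two_mul_ite_lt [CommRing R] (m t : ℕ) :
    ∑ a ∈ range (m + 1), (if a < t then (m.choose a : R) * (m - 2 * a) else 0) =
      t * m.choose t := by
  induction t with
  | zero => simp
  | succ t ih =>
    have hsplit : ∀ a, (if a < t + 1 then (m.choose a : R) * (m - 2 * a) else 0) =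
        (if a < t then (m.choose a : R) * (m - 2 * a) else 0) +
          if a = t then (m.choose a : R) * (m - 2 * a) else 0 := fun a => by grind
    rw [sum_congr rfl fun a _ => hsplit a, sum_add_distrib, ih, sum_ite_eq']
    split_ifs with htm <;> rw [mem_range] at htm
    · have h := congrArg (Nat.cast (R := R)) (Nat.choose_succ_right_eq m t)
      push_cast [Nat.cast_sub (Nat.le_of_lt_succ htm)] at h ⊢
      linear_combination -h
    · rw [Nat.choose_eq_zero_of_lt (by omega), Nat.choose_eq_zero_of_lt (by omega)]
      simp

theorem sum_range_choose_mul_sub_two_mul [CommRing R] (m : ℕ) :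
    ∑ a ∈ range (m + 1), (m.choose a : R) * (m - 2 * a) = 0 := by
  have h := sum_range_choose_mul_sub_two_mul_ite_lt (R := R) m (m + 1)
  rw [Nat.choose_succ_self, Nat.cast_zero, mul_zero] at h
  rw [← h]
  exact sum_congr rfl fun a ha => (if_pos (mem_range.mp ha)).symm

theorem two_mul_sum_range_choose_mul_sub [CommRing R] (m : ℕ) :
    2 * ∑ a ∈ range (m + 1), (m.choose a : R) * (m - a) = m * 2 ^ m := by
  calc 2 * ∑ a ∈ range (m + 1), (m.choose a : R) * (m - a)
      = m * ∑ a ∈ range (m + 1), (m.choose a : R) +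
          ∑ a ∈ range (m + 1), (m.choose a : R) * (m - 2 * a) := by
        rw [mul_sum, mul_sum, ← sum_add_distrib]
        exact sum_congr rfl fun a _ => by ring
    _ = m * 2 ^ m := by rw [sum_range_cast_choose, sum_range_choose_mul_sub_two_mul, add_zero]

theorem sub_add_one_mul_choose_eq_mul_ibinom (m T c : ℕ) :
    (T + 1 - c) * m.choose (T + 1 - c) = m * ibinom (m - 1) ((T : ℤ) - c) := by
  by_cases hcT : c ≤ T
  · rw [ibinom, if_pos (by omega), show ((T : ℤ) - c).toNat = T - c by omega,
      show T + 1 - c = T - c + 1 by omega]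
    rcases m with _ | m
    · simp
    · rw [Nat.add_one_sub_one, Nat.add_one_mul_choose_eq, mul_comm]
  · rw [ibinom, if_neg (by omega), show T + 1 - c = 0 by omega]
    simp

theorem sum_range_choose_mul_ibinom_sq [CommSemiring R] (r p T : ℕ) :
    ∑ c ∈ range (r + 1), (r.choose c : R) * (ibinom p ((T : ℤ) - c) : R) ^ 2 =
      ∑ j ∈ range (p + 1), (p.choose j : R) ^ 2 * ibinom r ((T : ℤ) - j) := by
  have ibinom_sub : ∀ q c : ℕ, (ibinom q ((T : ℤ) - c) : R) =
      if c ≤ T then (q.choose (T - c) : R) else 0 := fun q c => by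
    by_cases hc : c ≤ T
    · rw [ibinom, if_pos (by omega), if_pos hc, show ((T : ℤ) - c).toNat = T - c by omega]
    · rw [ibinom, if_neg (by omega), if_neg hc, Nat.cast_zero]
  -- both sides are the sum of `C(r, c) C(p, j)²` over `c + j = T`
  have hl : ∑ c ∈ range (r + 1), (r.choose c : R) * (ibinom p ((T : ℤ) - c) : R) ^ 2 =
      ∑ c ∈ range (T + 1), (r.choose c : R) * (p.choose (T - c) : R) ^ 2 := by
    rw [← eventually_constant_sum (n := r + 1 + (T + 1)) _ (by omega),
      eventually_constant_sum (N := T + 1) _ (by omega)]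
    · exact sum_congr rfl fun c hc => by rw [ibinom_sub, if_pos (by simp at hc; omega)]
    · exact fun c hc => by simp [ibinom_sub, show ¬ c ≤ T by omega]
    · exact fun c hc => by simp [Nat.choose_eq_zero_of_lt (show r < c by omega)]
  have hr : ∑ j ∈ range (p + 1), (p.choose j : R) ^ 2 * ibinom r ((T : ℤ) - j) =
      ∑ j ∈ range (T + 1), (p.choose j : R) ^ 2 * (r.choose (T - j) : R) := by
    rw [← eventually_constant_sum (n := p + 1 + (T + 1)) _ (by omega),
      eventually_constant_sum (N := T + 1) _ (by omega)]
    · exact sum_congr rfl fun j hj => by rw [ibinom_sub, if_pos (by simp at hj; omega)]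
    · exact fun j hj => by simp [ibinom_sub, show ¬ j ≤ T by omega]
    · exact fun j hj => by simp [Nat.choose_eq_zero_of_lt (show p < j by omega)]
  rw [hl, hr, ← sum_range_reflect]
  refine sum_congr rfl fun c hc => ?_
  rw [Nat.add_sub_cancel, Nat.sub_sub_self (by simp at hc; omega), mul_comm]

end Binomial

section HoldoutErrors

/-- `m · L̂` for a hold-out fold of size `m` holding `x` ones, when the training set holds `y` ones
and Majority predicts `1` iff `T < y`. -/
def holdoutErrors (m T x y : ℕ) : ℝ := if T < y then m - x else x

variable (m T : ℕ)

theorem holdoutErrors_eq (x y : ℕ) :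
    holdoutErrors m T x y = (m - x) - (if y ≤ T then 1 else 0) * (m - 2 * x) := by
  unfold holdoutErrors
  split_ifs <;> first | omega | ring

theorem sum_range_choose_mul_holdoutErrors (y : ℕ) :
    ∑ a ∈ range (m + 1), (m.choose a : ℝ) * holdoutErrors m T a y = m * 2 ^ m / 2 := by
  have hmean := two_mul_sum_range_choose_mul_sub (R := ℝ) m
  calc ∑ a ∈ range (m + 1), (m.choose a : ℝ) * holdoutErrors m T a y
      = ∑ a ∈ range (m + 1), (m.choose a : ℝ) * (m - a) -
          (if y ≤ T then 1 else 0) * ∑ a ∈ range (m + 1), (m.choose a : ℝ) * (m - 2 * a) := by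
        rw [mul_sum, ← sum_sub_distrib]
        exact sum_congr rfl fun a _ => by rw [holdoutErrors_eq]; ring
    _ = m * 2 ^ m / 2 := by
        rw [sum_range_choose_mul_sub_two_mul, mul_zero, sub_zero]
        linarith

theorem sum_range_choose_mul_holdoutErrors_mul (c : ℕ) :
    ∑ a ∈ range (m + 1), ∑ b ∈ range (m + 1),
        (m.choose a : ℝ) * m.choose b *
          (holdoutErrors m T a (b + c) * holdoutErrors m T b (a + c)) =
      (m * 2 ^ m / 2) ^ 2 + (m * ibinom (m - 1) ((T : ℤ) - c) : ℝ) ^ 2 := by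
  set ind : ℕ → ℝ := fun a => if a + c ≤ T then 1 else 0
  set P : ℕ → ℝ := fun a => m.choose a * (m - a)
  set Q : ℕ → ℝ := fun a => m.choose a * (m - a) * ind a
  set D : ℕ → ℝ := fun a => m.choose a * (m - 2 * a)
  set E : ℕ → ℝ := fun a => m.choose a * (m - 2 * a) * ind a
  have hP : ∑ a ∈ range (m + 1), P a = m * 2 ^ m / 2 := by
    linarith [two_mul_sum_range_choose_mul_sub (R := ℝ) m]
  have hD : ∑ a ∈ range (m + 1), D a = 0 := sum_range_choose_mul_sub_two_mul m
  have hE : ∑ a ∈ range (m + 1), E a = m * ibinom (m - 1) ((T : ℤ) - c) := by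
    have h := sum_range_choose_mul_sub_two_mul_ite_lt (R := ℝ) m (T + 1 - c)
    rw [← Nat.cast_mul, sub_add_one_mul_choose_eq_mul_ibinom, Nat.cast_mul] at h
    rw [← h]
    refine sum_congr rfl fun a _ => ?_
    simp only [E, ind, show a + c ≤ T ↔ a < T + 1 - c by omega]
    split_ifs <;> ring
  have hpoint : ∀ a b, (m.choose a : ℝ) * m.choose b *
      (holdoutErrors m T a (b + c) * holdoutErrors m T b (a + c)) =
        P a * P b - Q a * D b - D a * Q b + E a * E b := fun a b => by
    simp only [holdoutErrors_eq, P, Q, D, E, ind]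
    ring
  simp only [hpoint, sum_add_distrib, sum_sub_distrib, ← sum_mul_sum, hP, hD, hE]
  ring

end HoldoutErrors

section TwoFolds

theorem pow_eq_pow_sub_two_mul_mul_pow_mul_pow {M : Type*} [Monoid M] {a : M} {N m : ℕ}
    (h : 2 * m ≤ N) : a ^ N = a ^ (N - 2 * m) * a ^ m * a ^ m := by
  rw [← pow_add, ← pow_add]
  congr 1
  omega

variable {α : Type*} [Fintype α] [DecidableEq α] {s t : Finset α}

theorem card_filter_compl_eq_add (hst : Disjoint s t) (p : α → Prop) [DecidablePred p] :
    #{i ∈ univ \ s | p i} = #{i ∈ t | p i} + #{i ∈ (s ∪ t)ᶜ | p i} := by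
  have hsplit : univ \ s = t ∪ (s ∪ t)ᶜ := by
    ext i
    by_cases his : i ∈ s
    · simp [his, disjoint_left.mp hst his]
    · simp [his, em]
  rw [hsplit, filter_union, card_union_of_disjoint
    (disjoint_filter_filter (disjoint_of_subset_left subset_union_right disjoint_compl_right))]

theorem card_compl_union_of_card_eq (hst : Disjoint s t) {m : ℕ} (hs : #s = m) (ht : #t = m) :
    #(s ∪ t)ᶜ = Fintype.card α - 2 * m ∧ 2 * m ≤ Fintype.card α := by
  have h := card_le_univ (s ∪ t)
  rw [card_compl, card_union_of_disjoint hst, hs, ht] at *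
  omega

theorem sum_holdoutErrors (hst : Disjoint s t) {m : ℕ} (hs : #s = m) (ht : #t = m) (T : ℕ) :
    ∑ ω : α → Bool, holdoutErrors m T #{i ∈ s | ω i} (#{i ∈ t | ω i} + #{i ∈ (s ∪ t)ᶜ | ω i}) =
      m * 2 ^ Fintype.card α / 2 := by
  obtain ⟨hr, h2m⟩ := card_compl_union_of_card_eq hst hs ht
  rw [union_comm] at hr ⊢
  rw [sum_boolFun_card_filter_eq_sum_choose hst.symm fun a b c => holdoutErrors m T b (a + c)]
  have hpow : (2 : ℝ) ^ Fintype.card α = 2 ^ (Fintype.card α - 2 * m) * 2 ^ m * 2 ^ m :=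
    pow_eq_pow_sub_two_mul_mul_pow_mul_pow h2m
  simp only [nsmul_eq_mul, hs, ht, hr, sum_range_choose_mul_holdoutErrors, ← sum_mul,
    sum_range_cast_choose, hpow]
  ring

theorem sum_holdoutErrors_mul (hst : Disjoint s t) {m : ℕ} (hs : #s = m) (ht : #t = m) (T : ℕ) :
    ∑ ω : α → Bool,
        holdoutErrors m T #{i ∈ s | ω i} (#{i ∈ t | ω i} + #{i ∈ (s ∪ t)ᶜ | ω i}) *
          holdoutErrors m T #{i ∈ t | ω i} (#{i ∈ s | ω i} + #{i ∈ (s ∪ t)ᶜ | ω i}) =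
      m ^ 2 * 2 ^ Fintype.card α / 4 + m ^ 2 *
        ∑ c ∈ range (Fintype.card α - 2 * m + 1),
          ((Fintype.card α - 2 * m).choose c : ℝ) * (ibinom (m - 1) ((T : ℤ) - c) : ℝ) ^ 2 := by
  obtain ⟨hr, h2m⟩ := card_compl_union_of_card_eq hst hs ht
  have hpow : (2 : ℝ) ^ Fintype.card α = 2 ^ (Fintype.card α - 2 * m) * 2 ^ m * 2 ^ m :=
    pow_eq_pow_sub_two_mul_mul_pow_mul_pow h2m
  rw [sum_boolFun_card_filter_eq_sum_choose hst fun a b c =>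
    holdoutErrors m T a (b + c) * holdoutErrors m T b (a + c)]
  have hconditional : ∀ c, ∑ a ∈ range (m + 1), (m.choose a : ℝ) * ∑ b ∈ range (m + 1),
      (m.choose b : ℝ) * (holdoutErrors m T a (b + c) * holdoutErrors m T b (a + c)) =
        (m * 2 ^ m / 2) ^ 2 + (m * ibinom (m - 1) ((T : ℤ) - c) : ℝ) ^ 2 := fun c => by
    rw [← sum_range_choose_mul_holdoutErrors_mul]
    simp only [mul_sum, mul_assoc]
  simp only [nsmul_eq_mul, hs, ht, hr, hconditional, mul_add, sum_add_distrib]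
  rw [← sum_mul, sum_range_cast_choose, hpow, mul_sum]
  congr 1
  · ring
  · exact sum_congr rfl fun c _ => by ring

end TwoFolds

section Folds

variable {n m i : ℕ}

theorem card_cvFold (hi : 1 ≤ i) (hin : i * m ≤ n) : #(cvFold n m i) = m := by
  obtain ⟨j, rfl⟩ : ∃ j, i = j + 1 := ⟨i - 1, by omega⟩
  have hj : (j + 1) * m = j * m + m := Nat.succ_mul j m
  have hfold : cvFold n m (j + 1) = (Ico (j * m) (j * m + m)).attachFin
      fun x hx => by simp only [mem_Ico] at hx; omega := by
    ext x
    simp [cvFold, hj]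
  rw [hfold, card_attachFin, Nat.card_Ico, Nat.add_sub_cancel_left]

theorem disjoint_cvFold {j : ℕ} (hij : i < j) : Disjoint (cvFold n m i) (cvFold n m j) := by
  have : i * m ≤ (j - 1) * m := Nat.mul_le_mul_right m (by omega)
  rw [disjoint_left]
  intro x hxi hxj
  simp only [cvFold, mem_filter, mem_univ, true_and] at hxi hxj
  omega

theorem Lhat_eq_holdoutErrors {j : ℕ} (hmn : m ≤ n) (hij : Disjoint (cvFold n m i) (cvFold n m j))
    (ω : Fin n → Bool) :
    Lhat n m i ω = holdoutErrors m ((n - m) / 2) (Xc n m i ω)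
      (Xc n m j ω + #{l ∈ (cvFold n m i ∪ cvFold n m j)ᶜ | ω l}) / m := by
  have hthreshold : ∀ y : ℕ, ((n : ℝ) - m) / 2 < y ↔ (n - m) / 2 < y := fun y => by
    rw [div_lt_iff₀ two_pos, ← Nat.cast_sub hmn, ← Nat.cast_ofNat, ← Nat.cast_mul, Nat.cast_lt]
    omega
  rw [Lhat, Yc, card_filter_compl_eq_add hij, holdoutErrors, apply_ite (· / (m : ℝ))]
  exact if_congr (hthreshold _) rfl rfl

end Folds

/-- **Exact combinatorial form of the fold covariance of Majority.**
In the Majority cross-validation model with `k ∣ n`, `m = n/k`,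
`Cov(L̂₁, L̂₂) = 2^{-n} · Σ_{j=0}^{m-1} binom(m-1, j)² · binom(n-2m, ⌊(n-m)/2⌋ - j)`. -/
theorem majority_fold_covariance_combinatorial
    (n k : ℕ) (hn : 2 ≤ n) (hk : 2 ≤ k) (hkn : k ∣ n) (m : ℕ) (hm : m = n / k) :
    expec n (fun ω => Lhat n m 1 ω * Lhat n m 2 ω)
        - expec n (Lhat n m 1) * expec n (Lhat n m 2)
      = (2 : ℝ)⁻¹ ^ n * ∑ j ∈ Finset.range m,
          ((m - 1).choose j : ℝ) ^ 2 *
            (ibinom (n - 2 * m) (((n : ℤ) - m) / 2 - j) : ℝ) := by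
  obtain ⟨hm1, h2m⟩ : 1 ≤ m ∧ 2 * m ≤ n := by
    obtain ⟨q, rfl⟩ := hkn
    rw [Nat.mul_div_cancel_left q (by omega)] at hm
    subst hm
    exact ⟨Nat.pos_of_ne_zero (by rintro rfl; omega), Nat.mul_le_mul_right m hk⟩
  have hfolds : Disjoint (cvFold n m 1) (cvFold n m 2) := disjoint_cvFold one_lt_two
  have hcard1 : #(cvFold n m 1) = m := card_cvFold le_rfl (by omega)
  have hcard2 : #(cvFold n m 2) = m := card_cvFold one_le_two (by omega)
  have hL1 := Lhat_eq_holdoutErrors (by omega) hfolds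
  have hL2 := Lhat_eq_holdoutErrors (by omega) hfolds.symm
  simp only [Xc] at hL1 hL2
  have hsum1 : ∑ ω, Lhat n m 1 ω = m * 2 ^ n / 2 / m := by
    simp only [hL1, ← sum_div, sum_holdoutErrors hfolds hcard1 hcard2, Fintype.card_fin]
  have hsum2 : ∑ ω, Lhat n m 2 ω = m * 2 ^ n / 2 / m := by
    simp only [hL2, ← sum_div, sum_holdoutErrors hfolds.symm hcard2 hcard1, Fintype.card_fin]
  have hT : ((n : ℤ) - m) / 2 = ((n - m) / 2 : ℕ) := by omega
  have hreindex := sum_range_choose_mul_ibinom_sq (R := ℝ) (n - 2 * m) (m - 1) ((n - m) / 2)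
  rw [Nat.sub_add_cancel hm1] at hreindex
  rw [expec, expec, expec, hsum1, hsum2]
  simp only [hL1, hL2, union_comm (cvFold n m 2), div_mul_div_comm, ← sum_div]
  rw [sum_holdoutErrors_mul hfolds hcard1 hcard2, Fintype.card_fin, hT, ← hreindex, inv_pow]
  field_simp
  ring
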